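/- Let k ≥ 1, J = [[0, I_k], [−I_k, 0]] ∈ M_{2k}(ℝ), and G_ℂ = { A ∈ GL_{2k}(ℝ) : A·J = J·A }, with normalizer N(G_ℂ) in GL_{2k}(ℝ). The map p : N(G_ℂ) → {1, −1} (the two-element multiplicative group) defined by B⁻¹·J·B = p(B)·J is a well-defined surjective group homomorphism whose kernel is exactly G_ℂ; hence it induces a group isomorphism N(G_ℂ)/G_ℂ ≅ ℤ/2ℤ. -/

import Mathlib

open Matrix

/-- The standard complex structure matrix `J = [[0, I], [-I, 0]]`. -/
def symplJ (k : ℕ) : Matrix (Fin k ⊕ Fin k) (Fin k ⊕ Fin k) ℝ :=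
  Matrix.fromBlocks 0 1 (-1) 0

/-- The image `G_ℂ = { A ∈ GL_{2k}(ℝ) : A·J = J·A }` of `GL_k(ℂ)` under its
standard real embedding, as a subgroup of `GL_{2k}(ℝ)`. -/
def GLC (k : ℕ) : Subgroup (GL (Fin k ⊕ Fin k) ℝ) where
  carrier := {A | (A : Matrix (Fin k ⊕ Fin k) (Fin k ⊕ Fin k) ℝ) * symplJ k =
    symplJ k * (A : Matrix (Fin k ⊕ Fin k) (Fin k ⊕ Fin k) ℝ)}
  one_mem' := by simp
  mul_mem' := by
    intro a b ha hb
    simp only [Set.mem_setOf_eq] at *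
    set M := (a : Matrix (Fin k ⊕ Fin k) (Fin k ⊕ Fin k) ℝ)
    set N := (b : Matrix (Fin k ⊕ Fin k) (Fin k ⊕ Fin k) ℝ)
    have : ((a * b : GL (Fin k ⊕ Fin k) ℝ) : Matrix (Fin k ⊕ Fin k) (Fin k ⊕ Fin k) ℝ)
        = M * N := rfl
    rw [this, mul_assoc, hb, ← mul_assoc, ha, mul_assoc]
  inv_mem' := by
    intro a ha
    simp only [Set.mem_setOf_eq] at *
    set M := (a : Matrix (Fin k ⊕ Fin k) (Fin k ⊕ Fin k) ℝ)
    set N := ((a⁻¹ : GL (Fin k ⊕ Fin k) ℝ) : Matrix (Fin k ⊕ Fin k) (Fin k ⊕ Fin k) ℝ)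
    have hMN : M * N = 1 := a.mul_inv
    have hNM : N * M = 1 := a.inv_mul
    calc N * symplJ k = N * symplJ k * (M * N) := by rw [hMN, mul_one]
      _ = N * (symplJ k * M) * N := by noncomm_ring
      _ = N * (M * symplJ k) * N := by rw [ha]
      _ = (N * M) * (symplJ k * N) := by noncomm_ring
      _ = symplJ k * N := by rw [hNM, one_mul]

/-! For `B` in the normalizer, `K = B⁻¹JB` commutes with all of `G_ℂ` (conjugate `BAB⁻¹ ∈ G_ℂ`
back by `B`) and satisfies `K² = -1`. Commuting with the block-diagonal copies `diag(C, C)` of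
`GL_k(ℝ)` makes every block of `K` scalar, and commuting with `J` itself then gives
`K = a + bJ`; since `1, J` are linearly independent, `K² = -1` leaves `K = ±J`. The sign is
multiplicative because `(BC)⁻¹J(BC) = C⁻¹(±J)C`, it is `1` exactly on `G_ℂ`, and complex
conjugation `diag(1, -1)` anticommutes with `J`, so it attains `-1`. -/

theorem Matrix.mem_range_scalar_of_commute_units {n R : Type*} [Fintype n] [DecidableEq n]
    [CommRing R] {M : Matrix n n R} (hM : ∀ C : (Matrix n n R)ˣ, Commute (C : Matrix n n R) M) :
    M ∈ Set.range (scalar n) :=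
  mem_range_scalar_of_commute_transvectionStruct fun t => hM ⟨_, _, t.mul_inv, t.inv_mul⟩

section Conjugation

variable {M : Type*} [Monoid M]

theorem Units.commute_conj_of_commute (u : Mˣ) {a b : M} (h : Commute (↑u * a * ↑u⁻¹) b) :
    Commute a (↑u⁻¹ * b * ↑u) :=
  calc a * (↑u⁻¹ * b * ↑u) = ↑u⁻¹ * (↑u * a * ↑u⁻¹ * b) * ↑u := by simp [mul_assoc]
    _ = ↑u⁻¹ * (b * (↑u * a * ↑u⁻¹)) * ↑u := by rw [h.eq]
    _ = ↑u⁻¹ * b * ↑u * a := by simp [mul_assoc]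

theorem Units.commute_conj_iff (u : Mˣ) {a b : M} :
    Commute (↑u * a * ↑u⁻¹) b ↔ Commute a (↑u⁻¹ * b * ↑u) :=
  ⟨u.commute_conj_of_commute, fun h => by simpa using (u⁻¹.commute_conj_of_commute h.symm).symm⟩

end Conjugation

section SymplJ

variable {k : ℕ}

theorem symplJ_mul_self (k : ℕ) : symplJ k * symplJ k = -1 := by
  simp [symplJ, fromBlocks_multiply, ← fromBlocks_one, fromBlocks_neg]

theorem symplJ_ne_zero [NeZero k] : symplJ k ≠ 0 := fun h => by
  simpa [symplJ] using congrFun₂ h (Sum.inl 0) (Sum.inr 0)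

theorem neg_symplJ_ne_symplJ [NeZero k] : -symplJ k ≠ symplJ k := fun h => by
  have := congrFun₂ h (Sum.inl 0) (Sum.inr 0)
  norm_num [symplJ] at this

theorem fromBlocks_commute_symplJ_iff (X Y Z W : Matrix (Fin k) (Fin k) ℝ) :
    Commute (fromBlocks X Y Z W) (symplJ k) ↔ Z = -Y ∧ W = X := by
  simp only [Commute, SemiconjBy, symplJ, fromBlocks_multiply, fromBlocks_inj, Matrix.mul_zero,
    Matrix.zero_mul, Matrix.mul_one, Matrix.one_mul, Matrix.mul_neg, Matrix.neg_mul, add_zero,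
    zero_add]
  grind

theorem smul_one_add_smul_symplJ_mul_self (a b : ℝ) :
    (a • 1 + b • symplJ k) * (a • 1 + b • symplJ k) =
      (a * a - b * b) • 1 + (2 * a * b) • symplJ k := by
  simp only [add_mul, mul_add, smul_mul_smul_comm, one_mul, mul_one, symplJ_mul_self]
  module

theorem smul_one_add_smul_symplJ_inj [NeZero k] {a b a' b' : ℝ}
    (h : a • 1 + b • symplJ k = a' • 1 + b' • symplJ k) : a = a' ∧ b = b' := by
  simpa [symplJ] using And.intro (congrFun₂ h (Sum.inl 0) (Sum.inl 0))
    (congrFun₂ h (Sum.inl 0) (Sum.inr 0))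

end SymplJ

namespace GLC

variable {k : ℕ}

theorem mem_iff_commute {A : GL (Fin k ⊕ Fin k) ℝ} :
    A ∈ GLC k ↔ Commute (A : Matrix (Fin k ⊕ Fin k) (Fin k ⊕ Fin k) ℝ) (symplJ k) :=
  Iff.rfl

def symplJUnit (k : ℕ) : GL (Fin k ⊕ Fin k) ℝ :=
  ⟨symplJ k, -symplJ k, by rw [mul_neg, symplJ_mul_self, neg_neg],
    by rw [neg_mul, symplJ_mul_self, neg_neg]⟩

theorem symplJUnit_mem (k : ℕ) : symplJUnit k ∈ GLC k :=
  Commute.refl _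

def blockDiagUnit (C : GL (Fin k) ℝ) : GL (Fin k ⊕ Fin k) ℝ :=
  ⟨fromBlocks C 0 0 C, fromBlocks ↑C⁻¹ 0 0 ↑C⁻¹, by simp [fromBlocks_multiply],
    by simp [fromBlocks_multiply]⟩

theorem blockDiagUnit_mem (C : GL (Fin k) ℝ) : blockDiagUnit C ∈ GLC k := by
  simp [mem_iff_commute, Commute, SemiconjBy, blockDiagUnit, symplJ, fromBlocks_multiply]

theorem exists_eq_smul_one_add_smul_symplJ_of_commute
    {K : Matrix (Fin k ⊕ Fin k) (Fin k ⊕ Fin k) ℝ}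
    (hK : ∀ A ∈ GLC k, Commute (A : Matrix (Fin k ⊕ Fin k) (Fin k ⊕ Fin k) ℝ) K) :
    ∃ a b : ℝ, K = a • 1 + b • symplJ k := by
  rw [← fromBlocks_toBlocks K] at hK ⊢
  have hblocks (C : GL (Fin k) ℝ) :
      Commute (C : Matrix (Fin k) (Fin k) ℝ) K.toBlocks₁₁ ∧
      Commute (C : Matrix (Fin k) (Fin k) ℝ) K.toBlocks₁₂ := by
    have := (hK _ (blockDiagUnit_mem C)).eq
    simp only [blockDiagUnit, fromBlocks_multiply, fromBlocks_inj, Matrix.zero_mul,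
      Matrix.mul_zero, add_zero, zero_add] at this
    exact ⟨this.1, this.2.1⟩
  obtain ⟨a, ha⟩ := mem_range_scalar_of_commute_units fun C => (hblocks C).1
  obtain ⟨b, hb⟩ := mem_range_scalar_of_commute_units fun C => (hblocks C).2
  obtain ⟨hZ, hW⟩ := (fromBlocks_commute_symplJ_iff ..).mp (hK _ (symplJUnit_mem k)).symm
  refine ⟨a, b, ?_⟩
  rw [hZ, hW, ← ha, ← hb, symplJ, ← fromBlocks_one, fromBlocks_smul, fromBlocks_smul,
    fromBlocks_add]
  simp [smul_one_eq_diagonal]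

theorem eq_symplJ_or_eq_neg_symplJ_of_commute [NeZero k]
    {K : Matrix (Fin k ⊕ Fin k) (Fin k ⊕ Fin k) ℝ}
    (hK : ∀ A ∈ GLC k, Commute (A : Matrix (Fin k ⊕ Fin k) (Fin k ⊕ Fin k) ℝ) K)
    (hK₂ : K * K = -1) : K = symplJ k ∨ K = -symplJ k := by
  obtain ⟨a, b, rfl⟩ := exists_eq_smul_one_add_smul_symplJ_of_commute hK
  rw [smul_one_add_smul_symplJ_mul_self] at hK₂
  obtain ⟨h₁, h₂⟩ := smul_one_add_smul_symplJ_inj (a' := -1) (b' := 0) (hK₂.trans (by simp))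
  have ha : a = 0 := mul_self_eq_zero.mp (by nlinarith [mul_self_nonneg a])
  subst ha
  rcases mul_self_eq_one_iff.mp (by linarith : b * b = 1) with rfl | rfl <;> simp

def conjSymplJ (B : GL (Fin k ⊕ Fin k) ℝ) : Matrix (Fin k ⊕ Fin k) (Fin k ⊕ Fin k) ℝ :=
  (↑B⁻¹ : Matrix (Fin k ⊕ Fin k) (Fin k ⊕ Fin k) ℝ) * symplJ k * B

theorem conjSymplJ_mul_self (B : GL (Fin k ⊕ Fin k) ℝ) : conjSymplJ B * conjSymplJ B = -1 := by
  simp [conjSymplJ, mul_assoc, ← mul_assoc (symplJ k) (symplJ k), symplJ_mul_self]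

theorem conjSymplJ_mul (B C : GL (Fin k ⊕ Fin k) ℝ) :
    conjSymplJ (B * C) =
      (↑C⁻¹ : Matrix (Fin k ⊕ Fin k) (Fin k ⊕ Fin k) ℝ) * conjSymplJ B * C := by
  simp [conjSymplJ, mul_assoc]

theorem conjSymplJ_eq_self_iff {B : GL (Fin k ⊕ Fin k) ℝ} :
    conjSymplJ B = symplJ k ↔ B ∈ GLC k := by
  rw [conjSymplJ, mul_assoc, Units.inv_mul_eq_iff_eq_mul, mem_iff_commute, commute_iff_eq,
    eq_comm]

theorem mem_normalizer_iff_forall_commute {B : GL (Fin k ⊕ Fin k) ℝ} :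
    B ∈ Subgroup.normalizer (GLC k : Set (GL (Fin k ⊕ Fin k) ℝ)) ↔
      ∀ A : GL (Fin k ⊕ Fin k) ℝ, A ∈ GLC k ↔
        Commute (A : Matrix (Fin k ⊕ Fin k) (Fin k ⊕ Fin k) ℝ) (conjSymplJ B) := by
  simp only [Subgroup.mem_normalizer_iff, mem_iff_commute, Units.val_mul, B.commute_conj_iff,
    conjSymplJ]

theorem conjSymplJ_eq_or_of_mem_normalizer [NeZero k] {B : GL (Fin k ⊕ Fin k) ℝ}
    (hB : B ∈ Subgroup.normalizer (GLC k : Set (GL (Fin k ⊕ Fin k) ℝ))) :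
    conjSymplJ B = symplJ k ∨ conjSymplJ B = -symplJ k :=
  eq_symplJ_or_eq_neg_symplJ_of_commute (fun A => (mem_normalizer_iff_forall_commute.mp hB A).mp)
    (conjSymplJ_mul_self B)

open Classical in
noncomputable def conjSign (B : GL (Fin k ⊕ Fin k) ℝ) : ℤˣ :=
  if conjSymplJ B = symplJ k then 1 else -1

theorem conjSymplJ_eq_conjSign_smul [NeZero k] {B : GL (Fin k ⊕ Fin k) ℝ}
    (hB : B ∈ Subgroup.normalizer (GLC k : Set (GL (Fin k ⊕ Fin k) ℝ))) :
    conjSymplJ B = ((conjSign B : ℤ) : ℝ) • symplJ k := by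
  unfold conjSign
  split_ifs with h
  · simpa using h
  · simpa using (conjSymplJ_eq_or_of_mem_normalizer hB).resolve_left h

theorem conjSign_eq_one_iff {B : GL (Fin k ⊕ Fin k) ℝ} : conjSign B = 1 ↔ B ∈ GLC k := by
  rw [conjSign, ← conjSymplJ_eq_self_iff]
  split_ifs with h <;> simp [h]

theorem conjSign_mul [NeZero k] {B C : GL (Fin k ⊕ Fin k) ℝ}
    (hB : B ∈ Subgroup.normalizer (GLC k : Set (GL (Fin k ⊕ Fin k) ℝ)))
    (hC : C ∈ Subgroup.normalizer (GLC k : Set (GL (Fin k ⊕ Fin k) ℝ))) :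
    conjSign (B * C) = conjSign B * conjSign C := by
  have h := conjSymplJ_eq_conjSign_smul (mul_mem hB hC)
  rw [conjSymplJ_mul, conjSymplJ_eq_conjSign_smul hB, Matrix.mul_smul, Matrix.smul_mul,
    ← conjSymplJ, conjSymplJ_eq_conjSign_smul hC, smul_smul] at h
  ext
  exact_mod_cast (smul_left_injective ℝ symplJ_ne_zero h).symm

noncomputable def normalizerSign (k : ℕ) [NeZero k] :
    Subgroup.normalizer (GLC k : Set (GL (Fin k ⊕ Fin k) ℝ)) →* ℤˣ :=
  MonoidHom.mk' (fun B => conjSign (B : GL (Fin k ⊕ Fin k) ℝ)) fun B C => conjSign_mul B.2 C.2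

def complexConjUnit (k : ℕ) : GL (Fin k ⊕ Fin k) ℝ :=
  ⟨fromBlocks 1 0 0 (-1), fromBlocks 1 0 0 (-1), by simp [fromBlocks_multiply],
    by simp [fromBlocks_multiply]⟩

theorem conjSymplJ_complexConjUnit (k : ℕ) : conjSymplJ (complexConjUnit k) = -symplJ k := by
  simp [conjSymplJ, complexConjUnit, symplJ, fromBlocks_multiply, fromBlocks_neg]

theorem mem_normalizer_of_conjSymplJ_eq_neg {B : GL (Fin k ⊕ Fin k) ℝ}
    (hB : conjSymplJ B = -symplJ k) :
    B ∈ Subgroup.normalizer (GLC k : Set (GL (Fin k ⊕ Fin k) ℝ)) :=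
  mem_normalizer_iff_forall_commute.mpr fun A => by rw [hB, Commute.neg_right_iff]; rfl

theorem complexConjUnit_mem_normalizer (k : ℕ) :
    complexConjUnit k ∈ Subgroup.normalizer (GLC k : Set (GL (Fin k ⊕ Fin k) ℝ)) :=
  mem_normalizer_of_conjSymplJ_eq_neg (conjSymplJ_complexConjUnit k)

theorem conjSign_complexConjUnit [NeZero k] : conjSign (complexConjUnit k) = -1 := by
  rw [conjSign, if_neg]
  rw [conjSymplJ_complexConjUnit]
  exact neg_symplJ_ne_symplJ

theorem normalizerSign_surjective [NeZero k] : Function.Surjective (normalizerSign k) := by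
  intro u
  rcases Int.units_eq_one_or u with rfl | rfl
  · exact ⟨1, map_one _⟩
  · exact ⟨⟨_, complexConjUnit_mem_normalizer k⟩, conjSign_complexConjUnit⟩

end GLC

/-- Exactness part of the paper's Lemma 6.1 (lem:N(GL(C))): the map
`p : N(G_ℂ) → {1, -1}` defined by `B⁻¹·J·B = p(B)·J` is a well-defined
surjective group homomorphism with kernel exactly `G_ℂ`, and it induces a
group isomorphism `N(G_ℂ)/G_ℂ ≅ ℤ/2ℤ`. -/
theorem GLC_normalizer_exact_sequence (k : ℕ) (hk : 1 ≤ k) :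
    ∃ p : (Subgroup.normalizer (GLC k : Set (GL (Fin k ⊕ Fin k) ℝ))) →* ℝˣ,
      (∀ B : (Subgroup.normalizer (GLC k : Set (GL (Fin k ⊕ Fin k) ℝ))),
        (((B : GL (Fin k ⊕ Fin k) ℝ)⁻¹ : GL (Fin k ⊕ Fin k) ℝ) :
            Matrix (Fin k ⊕ Fin k) (Fin k ⊕ Fin k) ℝ) * symplJ k *
          ((B : GL (Fin k ⊕ Fin k) ℝ) : Matrix (Fin k ⊕ Fin k) (Fin k ⊕ Fin k) ℝ)
            = (p B : ℝ) • symplJ k) ∧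
      (∀ B : (Subgroup.normalizer (GLC k : Set (GL (Fin k ⊕ Fin k) ℝ))), p B = 1 ∨ p B = -1) ∧
      (∃ B : (Subgroup.normalizer (GLC k : Set (GL (Fin k ⊕ Fin k) ℝ))), p B = -1) ∧
      (∀ B : (Subgroup.normalizer (GLC k : Set (GL (Fin k ⊕ Fin k) ℝ))), p B = 1 ↔ (B : GL (Fin k ⊕ Fin k) ℝ) ∈ GLC k) ∧
      ∃ e : ((Subgroup.normalizer (GLC k : Set (GL (Fin k ⊕ Fin k) ℝ))) ⧸ (GLC k).subgroupOf (Subgroup.normalizer (GLC k : Set (GL (Fin k ⊕ Fin k) ℝ)))) ≃*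
          Multiplicative (ZMod 2),
        ∀ B : (Subgroup.normalizer (GLC k : Set (GL (Fin k ⊕ Fin k) ℝ))), e (QuotientGroup.mk B) = 1 ↔ p B = 1 := by
  have : NeZero k := ⟨by omega⟩
  set σ := GLC.normalizerSign k
  have hcast : Function.Injective (Units.map (Int.castRingHom ℝ : ℤ →* ℝ)) :=
    Units.map_injective Int.cast_injective
  have hker : (GLC k).subgroupOf (Subgroup.normalizer (GLC k : Set (GL (Fin k ⊕ Fin k) ℝ))) =
      σ.ker := by
    ext B
    exact GLC.conjSign_eq_one_iff.symm
  refine ⟨(Units.map (Int.castRingHom ℝ : ℤ →* ℝ)).comp σ, fun B => ?_, fun B => ?_,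
    ⟨⟨_, GLC.complexConjUnit_mem_normalizer k⟩, ?_⟩, fun B => ?_,
    (QuotientGroup.quotientMulEquivOfEq hker).trans
      ((QuotientGroup.quotientKerEquivOfSurjective σ GLC.normalizerSign_surjective).trans
        (mulEquivOfCyclicCardEq (by simp))), fun B => ?_⟩
  · exact GLC.conjSymplJ_eq_conjSign_smul B.2
  · rcases Int.units_eq_one_or (σ B) with h | h <;> simp [h]
  · simp [σ, GLC.normalizerSign, GLC.conjSign_complexConjUnit]
  · rw [MonoidHom.comp_apply, map_eq_one_iff _ hcast]
    exact GLC.conjSign_eq_one_iff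
  · simp [map_eq_one_iff _ hcast]
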